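/- arXiv:1904.06283 — 2 statements merged into one kernel-verified Lean document; each statement's English description precedes it below -/
import Mathlib

section
/- The number of orbits of the polyurethane group 𝒫_n acting on S_n equals the n-th Catalan number C_n = (1/(n+1))·binom(2n, n). -/
/-!
A toggle `p i` acts only when an entry larger than `i + 1` separates `i` and `i + 1`, so it never
changes the shape of the decreasing binary tree of a permutation (the tree whose root is the
maximum, with the entries to its left and right as subtrees): below the smallest subtree that
contains both `i` and `i + 1`, exchanging them is an order-preserving relabelling. Conversely,
toggling `j` whenever `j + 1` lies left of `n` and `j` right of it makes the left part an initial
segment of the values, and recursing on both sides moves every permutation to the canonical one of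
its shape. So the orbits are in bijection with binary trees on `n` nodes, which are counted by the
Catalan numbers.
-/

/-- `l` is a permutation of `{1, …, n}`, written as a word. -/
def IsPermList (n : ℕ) (l : List ℕ) : Prop := l.Perm (List.range' 1 n)

/-- The word obtained from `l` by exchanging the positions of the entries `i` and `i+1`. -/
def swapEntries (i : ℕ) (l : List ℕ) : List ℕ :=
  l.map fun x => if x = i then i + 1 else if x = i + 1 then i else x

/-- Some entry larger than `i+1` appears (strictly) between the entries `i` and `i+1`
in the word `l`. -/
def ToggleApplies (i : ℕ) (l : List ℕ) : Prop :=
  ∃ a ∈ l, i + 1 < a ∧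
    min (l.idxOf i) (l.idxOf (i + 1)) < l.idxOf a ∧
    l.idxOf a < max (l.idxOf i) (l.idxOf (i + 1))

open scoped Classical in
/-- The polyurethane toggle `p i`. -/
noncomputable def toggle (i : ℕ) (l : List ℕ) : List ℕ :=
  if ToggleApplies i l then swapEntries i l else l

/-- One application of a polyurethane toggle `p i`, `i ∈ [n-1]`. -/
def ToggleStep (n : ℕ) (x y : List ℕ) : Prop :=
  ∃ i, 1 ≤ i ∧ i ≤ n - 1 ∧ y = toggle i x

/-- `x` and `y` lie in the same orbit of the polyurethane group
`𝒫ₙ = ⟨p₁, …, p_{n-1}⟩` acting on permutations. -/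
def OrbitRel (n : ℕ) : List ℕ → List ℕ → Prop := Relation.EqvGen (ToggleStep n)

/-- The orbit equivalence relation of `𝒫ₙ` on the set of permutations of `{1, …, n}`. -/
def orbitSetoid (n : ℕ) : Setoid {l : List ℕ // IsPermList n l} :=
  Setoid.comap Subtype.val ⟨OrbitRel n, Relation.EqvGen.is_equivalence _⟩

open List

/-- The shape of the decreasing binary tree of `l`. -/
def shape (l : List ℕ) : BinaryTree Unit :=
  match h : l.max? with
  | none => .nil
  | some m =>
    .node () (shape (l.take (l.idxOf m))) (shape (l.drop (l.idxOf m + 1)))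
termination_by l.length
decreasing_by all_goals have := idxOf_lt_length_iff.mpr (max?_mem h); simp; omega

@[simp] lemma shape_nil : shape [] = .nil := by
  rw [shape]; rfl

lemma shape_append_cons {u v : List ℕ} {m : ℕ} (hu : ∀ x ∈ u, x < m) (hv : ∀ x ∈ v, x ≤ m) :
    shape (u ++ m :: v) = .node () (shape u) (shape v) := by
  have hmax : (u ++ m :: v).max? = some m := by
    rw [max?_eq_some_iff]
    simp only [mem_append, mem_cons]
    refine ⟨by simp, ?_⟩
    rintro b (hb | rfl | hb)
    exacts [(hu b hb).le, le_rfl, hv b hb]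
  have hidx : (u ++ m :: v).idxOf m = u.length := by
    rw [idxOf_append_of_notMem fun h => (hu m h).false, idxOf_cons_self, add_zero]
  rw [shape]
  split
  · simp_all
  · rename_i m' h
    obtain rfl : m = m' := Option.some_injective _ (hmax.symm.trans h)
    simp [hidx]

lemma induction_split_max {P : List ℕ → Prop} (nil : P [])
    (split : ∀ u m v, (∀ x ∈ u, x < m) → (∀ x ∈ v, x ≤ m) → P u → P v → P (u ++ m :: v))
    (l : List ℕ) : P l := by
  induction hl : l.length using Nat.strong_induction_on generalizing l with
  | _ N ih =>
  cases hmax : l.max? with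
  | none => rw [max?_eq_none_iff.mp hmax]; exact nil
  | some m =>
    obtain ⟨hm, hle⟩ := max?_eq_some_iff.mp hmax
    have hk := idxOf_lt_length_iff.mpr hm
    have hdecomp : l = l.take (l.idxOf m) ++ m :: l.drop (l.idxOf m + 1) := by
      conv_lhs => rw [← take_append_drop (l.idxOf m) l, drop_eq_getElem_cons hk, getElem_idxOf hk]
    have hmu : m ∉ l.take (l.idxOf m) := fun h => by
      have hlt := idxOf_lt_length_iff.mpr h
      have heq : (l.take (l.idxOf m)).idxOf m = l.idxOf m := by
        conv_rhs => rw [← take_append_drop (l.idxOf m) l, idxOf_append_of_mem h]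
      rw [heq, length_take] at hlt
      omega
    rw [hdecomp]
    refine split _ _ _ (fun x hx => lt_of_le_of_ne (hle x (take_subset _ _ hx)) ?_)
      (fun x hx => hle x (drop_subset _ _ hx)) (ih _ (by simp; omega) _ rfl)
      (ih _ (by simp; omega) _ rfl)
    rintro rfl; exact hmu hx

lemma numNodes_shape (l : List ℕ) : (shape l).numNodes = l.length := by
  induction l using induction_split_max with
  | nil => simp
  | split u m v hu hv ihu ihv =>
    rw [shape_append_cons hu hv, BinaryTree.numNodes, ihu, ihv, length_append, length_cons]
    omega

lemma shape_map_of_strictMonoOn (l : List ℕ) {f : ℕ → ℕ} (hf : StrictMonoOn f {x | x ∈ l}) :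
    shape (l.map f) = shape l := by
  induction l using induction_split_max generalizing f with
  | nil => rfl
  | split u m v hu hv ihu ihv =>
    have hm : m ∈ u ++ m :: v := by simp
    rw [map_append, map_cons, shape_append_cons hu hv, shape_append_cons, ihu, ihv]
    · exact hf.mono fun _ hx => mem_append_right _ (mem_cons_of_mem _ hx)
    · exact hf.mono fun _ hx => mem_append_left _ hx
    · simp only [mem_map, forall_exists_index, and_imp, forall_apply_eq_imp_iff₂]
      exact fun x hx => (hf.lt_iff_lt (by simp [hx]) hm).mpr (hu x hx)
    · simp only [mem_map, forall_exists_index, and_imp, forall_apply_eq_imp_iff₂]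
      exact fun x hx => (hf.le_iff_le (by simp [hx]) hm).mpr (hv x hx)

lemma swapEntries_eq_map (i : ℕ) (l : List ℕ) :
    swapEntries i l = l.map (Equiv.swap i (i + 1)) :=
  map_congr_left fun x _ => (Equiv.swap_apply_def _ _ x).symm

lemma swapEntries_append (i : ℕ) (u v : List ℕ) :
    swapEntries i (u ++ v) = swapEntries i u ++ swapEntries i v := map_append

lemma swapEntries_cons (i m : ℕ) (l : List ℕ) :
    swapEntries i (m :: l) = Equiv.swap i (i + 1) m :: swapEntries i l := by
  simp [swapEntries_eq_map]

lemma swapEntries_swapEntries (i : ℕ) (l : List ℕ) : swapEntries i (swapEntries i l) = l := by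
  rw [swapEntries_eq_map, swapEntries_eq_map, map_map]
  exact map_id'' (Equiv.swap_apply_self _ _) l

lemma swapEntries_of_notMem {i : ℕ} {l : List ℕ} (hi : i ∉ l) (hi1 : i + 1 ∉ l) :
    swapEntries i l = l := by
  rw [swapEntries_eq_map]
  refine (map_congr_left fun x hx => Equiv.swap_apply_of_ne_of_ne ?_ ?_).trans (map_id l)
  · rintro rfl; exact hi hx
  · rintro rfl; exact hi1 hx

lemma swapEntries_perm {i : ℕ} {l : List ℕ} (hl : l.Nodup) (hi : i ∈ l) (hi1 : i + 1 ∈ l) :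
    swapEntries i l ~ l := by
  rw [swapEntries_eq_map]
  refine perm_of_nodup_nodup_toFinset_eq (hl.map (Equiv.injective _)) hl ?_
  ext x
  simp only [mem_toFinset, mem_map]
  constructor
  · rintro ⟨y, hy, rfl⟩
    rw [Equiv.swap_apply_def]
    split_ifs <;> assumption
  · intro hx
    exact ⟨Equiv.swap i (i + 1) x, by rw [Equiv.swap_apply_def]; split_ifs <;> simp_all,
      Equiv.swap_apply_self _ _ x⟩

lemma mem_of_perm_range' {s k x : ℕ} {l : List ℕ} (hl : l ~ range' s k) (h₁ : s ≤ x)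
    (h₂ : x < s + k) : x ∈ l :=
  hl.mem_iff.mpr (mem_range'_1.mpr ⟨h₁, h₂⟩)

lemma swapEntries_perm_range' {a k i : ℕ} {l : List ℕ} (hl : l ~ range' (a + 1) k)
    (hi : a + 1 ≤ i) (hik : i + 1 ≤ a + k) : swapEntries i l ~ range' (a + 1) k :=
  (swapEntries_perm (hl.nodup_iff.mpr nodup_range') (mem_of_perm_range' hl hi (by omega))
    (mem_of_perm_range' hl (by omega) (by omega))).trans hl

/-- Exchanging `i` and `i + 1` is order-preserving on a word that lacks one of them. -/
lemma shape_swapEntries_of_notMem {i : ℕ} {l : List ℕ} (h : i ∉ l ∨ i + 1 ∉ l) :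
    shape (swapEntries i l) = shape l := by
  rw [swapEntries_eq_map]
  refine shape_map_of_strictMonoOn l fun x hx y hy hxy => ?_
  rw [Equiv.swap_apply_def, Equiv.swap_apply_def]
  rcases h with h | h <;> split_ifs <;> grind

lemma mem_of_idxOf_append_lt_length {a : ℕ} {u v : List ℕ} (h : (u ++ v).idxOf a < u.length) :
    a ∈ u := by
  by_contra hau
  rw [idxOf_append_of_notMem hau] at h
  omega

lemma toggleApplies_append_left_iff {i : ℕ} {u v : List ℕ} (hi : i ∈ u) (hi1 : i + 1 ∈ u) :
    ToggleApplies i (u ++ v) ↔ ToggleApplies i u := by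
  unfold ToggleApplies
  rw [idxOf_append_of_mem hi, idxOf_append_of_mem hi1]
  have := idxOf_lt_length_iff.mpr hi
  have := idxOf_lt_length_iff.mpr hi1
  constructor
  · rintro ⟨a, -, hia, h1, h2⟩
    have hau : a ∈ u := mem_of_idxOf_append_lt_length (v := v) (by omega)
    rw [idxOf_append_of_mem hau] at h1 h2
    exact ⟨a, hau, hia, h1, h2⟩
  · rintro ⟨a, hau, hia, h1, h2⟩
    exact ⟨a, mem_append_left _ hau, hia, by rwa [idxOf_append_of_mem hau],
      by rwa [idxOf_append_of_mem hau]⟩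

lemma toggleApplies_append_right_iff {i : ℕ} {u v : List ℕ} (huv : u.Disjoint v) (hi : i ∈ v)
    (hi1 : i + 1 ∈ v) : ToggleApplies i (u ++ v) ↔ ToggleApplies i v := by
  unfold ToggleApplies
  rw [idxOf_append_of_notMem fun h => huv h hi, idxOf_append_of_notMem fun h => huv h hi1]
  constructor
  · rintro ⟨a, ha, hia, h1, h2⟩
    have hau : a ∉ u := fun hau => by
      have := idxOf_lt_length_iff.mpr hau
      rw [idxOf_append_of_mem hau] at h1
      omega
    rw [idxOf_append_of_notMem hau] at h1 h2
    exact ⟨a, (mem_append.mp ha).resolve_left hau, hia, by omega, by omega⟩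
  · rintro ⟨a, hav, hia, h1, h2⟩
    have hau : a ∉ u := fun hau => huv hau hav
    exact ⟨a, mem_append_right _ hav, hia, by rw [idxOf_append_of_notMem hau]; omega,
      by rw [idxOf_append_of_notMem hau]; omega⟩

lemma toggleApplies_append_cons {j m : ℕ} {u v : List ℕ} (hj1u : j + 1 ∈ u) (hju : j ∉ u)
    (hmu : m ∉ u) (hjm : j + 1 < m) : ToggleApplies j (u ++ m :: v) := by
  have := idxOf_lt_length_iff.mpr hj1u
  refine ⟨m, by simp, hjm, ?_, ?_⟩ <;>
    rw [idxOf_append_of_mem hj1u, idxOf_append_of_notMem hju, idxOf_append_of_notMem hmu,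
      idxOf_cons_self, idxOf_cons_ne _ (by omega)] <;> omega

lemma toggle_append_left {i : ℕ} {u v : List ℕ} (huv : u.Disjoint v) (hi : i ∈ u)
    (hi1 : i + 1 ∈ u) : toggle i (u ++ v) = toggle i u ++ v := by
  unfold toggle
  rw [toggleApplies_append_left_iff hi hi1]
  split_ifs
  · rw [swapEntries_append, swapEntries_of_notMem (huv hi) (huv hi1)]
  · rfl

lemma toggle_append_right {i : ℕ} {u v : List ℕ} (huv : u.Disjoint v) (hi : i ∈ v)
    (hi1 : i + 1 ∈ v) : toggle i (u ++ v) = u ++ toggle i v := by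
  unfold toggle
  rw [toggleApplies_append_right_iff huv hi hi1]
  split_ifs
  · rw [swapEntries_append, swapEntries_of_notMem (fun h => huv h hi) (fun h => huv h hi1)]
  · rfl

/-- Split the word at its maximum `m`: the larger entry between `i` and `i + 1` forces
`m > i + 1`, and on either side of `m` the toggle acts either as an order-preserving relabelling
or, recursively, as a toggle. -/
lemma shape_swapEntries {i : ℕ} {l : List ℕ} (hl : l.Nodup) (h : ToggleApplies i l) :
    shape (swapEntries i l) = shape l := by
  induction l using induction_split_max with
  | nil => rfl
  | split u m v hu hv ihu ihv =>
    have him : i + 1 < m := by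
      obtain ⟨w, hw, hiw, -⟩ := h
      have : w ≤ m := by
        simp only [mem_append, mem_cons] at hw
        rcases hw with hw | rfl | hw
        exacts [(hu w hw).le, le_rfl, hv w hw]
      omega
    have hswap : ∀ x, Equiv.swap i (i + 1) x ≤ x ∨ Equiv.swap i (i + 1) x < m := by
      intro x; rw [Equiv.swap_apply_def]; split_ifs <;> omega
    rw [swapEntries_append, swapEntries_cons, Equiv.swap_apply_of_ne_of_ne (by omega) (by omega),
      shape_append_cons hu hv, shape_append_cons]
    rotate_left
    · simp only [swapEntries_eq_map, mem_map, forall_exists_index, and_imp,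
        forall_apply_eq_imp_iff₂]
      exact fun x hx => (hswap x).elim (fun h => h.trans_lt (hu x hx)) id
    · simp only [swapEntries_eq_map, mem_map, forall_exists_index, and_imp,
        forall_apply_eq_imp_iff₂]
      exact fun x hx => (hswap x).elim (fun h => h.trans (hv x hx)) le_of_lt
    congr 1
    · by_cases hiu : i ∈ u ∧ i + 1 ∈ u
      · exact ihu hl.of_append_left ((toggleApplies_append_left_iff hiu.1 hiu.2).mp h)
      · exact shape_swapEntries_of_notMem (not_and_or.mp hiu)
    · by_cases hiv : i ∈ v ∧ i + 1 ∈ v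
      · rw [← singleton_append, ← append_assoc] at hl h
        exact ihv hl.of_append_right
          ((toggleApplies_append_right_iff (disjoint_of_nodup_append hl) hiv.1 hiv.2).mp h)
      · exact shape_swapEntries_of_notMem (not_and_or.mp hiv)

lemma ToggleStep.isPermList_iff {n : ℕ} {x y : List ℕ} (h : ToggleStep n x y) :
    IsPermList n x ↔ IsPermList n y := by
  obtain ⟨i, hi, hin, rfl⟩ := h
  have hswap : ∀ l, IsPermList n l → IsPermList n (swapEntries i l) := fun l hl =>
    swapEntries_perm_range' (a := 0) hl hi (by omega)
  unfold toggle
  split_ifs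
  · exact ⟨hswap x, fun hy => swapEntries_swapEntries i x ▸ hswap _ hy⟩
  · rfl

lemma ToggleStep.shape_eq {n : ℕ} {x y : List ℕ} (h : ToggleStep n x y) (hx : IsPermList n x) :
    shape x = shape y := by
  obtain ⟨i, -, -, rfl⟩ := h
  unfold toggle
  split_ifs with happ
  · exact (shape_swapEntries (hx.nodup_iff.mpr nodup_range') happ).symm
  · rfl

lemma OrbitRel.shape_eq {n : ℕ} {x y : List ℕ} (h : OrbitRel n x y) (hx : IsPermList n x) :
    shape x = shape y := by
  let P l := IsPermList n l ∧ shape l = shape x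
  have hstep : ToggleStep n ≤ fun a b => (P a ↔ P b) := fun a b hab =>
    ⟨fun ⟨ha, hs⟩ => ⟨hab.isPermList_iff.mp ha, (hab.shape_eq ha).symm.trans hs⟩,
      fun ⟨hb, hs⟩ =>
        ⟨hab.isPermList_iff.mpr hb, (hab.shape_eq (hab.isPermList_iff.mpr hb)).trans hs⟩⟩
  have hequiv : Equivalence fun a b => (P a ↔ P b) := ⟨fun _ => Iff.rfl, Iff.symm, Iff.trans⟩
  exact ((hequiv.eqvGen_iff.mp (Relation.EqvGen.mono hstep _ _ h)).mp ⟨hx, rfl⟩).2.symm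

lemma range'_perm_append_cons (a p q : ℕ) :
    range' (a + 1) (p + q + 1) ~ range' (a + 1) p ++ (a + p + q + 1) :: range' (a + p + 1) q := by
  have hsplit : range' (a + 1) (p + q + 1) =
      range' (a + 1) p ++ (range' (a + p + 1) q ++ [a + p + q + 1]) := by
    rw [show p + q + 1 = p + (q + 1) by omega, ← range'_append (step := 1), range'_concat,
      one_mul, one_mul, show a + 1 + p = a + p + 1 by omega,
      show a + p + 1 + q = a + p + q + 1 by omega]
  rw [hsplit]
  exact (perm_append_singleton _ _).append_left _

/-- The word of shape `t` on the values `a + 1, …, a + #t` in which every left subtree carries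
smaller values than the corresponding right subtree. -/
def canon : ℕ → BinaryTree Unit → List ℕ
  | _, .nil => []
  | a, .node _ t₁ t₂ =>
    canon a t₁ ++ (a + t₁.numNodes + t₂.numNodes + 1) :: canon (a + t₁.numNodes) t₂

lemma canon_perm (a : ℕ) (t : BinaryTree Unit) : canon a t ~ range' (a + 1) t.numNodes := by
  induction t generalizing a with
  | nil => rfl
  | node _ t₁ t₂ ih₁ ih₂ =>
    exact ((ih₁ a).append ((ih₂ _).cons _)).trans (range'_perm_append_cons _ _ _).symm

lemma shape_canon (a : ℕ) (t : BinaryTree Unit) : shape (canon a t) = t := by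
  induction t generalizing a with
  | nil => simp [canon]
  | node _ t₁ t₂ ih₁ ih₂ =>
    rw [canon, shape_append_cons, ih₁, ih₂]
    · intro x hx
      have := mem_range'_1.mp ((canon_perm a t₁).mem_iff.mp hx)
      omega
    · intro x hx
      have := mem_range'_1.mp ((canon_perm _ t₂).mem_iff.mp hx)
      omega

lemma canon_shape_append_cons (a : ℕ) {u v : List ℕ} {m : ℕ} (hu : ∀ x ∈ u, x < m)
    (hv : ∀ x ∈ v, x ≤ m) : canon a (shape (u ++ m :: v)) =
      canon a (shape u) ++ (a + u.length + v.length + 1) :: canon (a + u.length) (shape v) := by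
  rw [shape_append_cons hu hv, canon, numNodes_shape, numNodes_shape]

lemma lt_of_append_cons_perm_range' {a k : ℕ} {u v : List ℕ}
    (hl : u ++ (a + k) :: v ~ range' (a + 1) k) : ∀ x ∈ u ++ v, x < a + k := by
  have hk := (nodup_cons.mp (nodup_middle.mp (hl.nodup_iff.mpr nodup_range'))).1
  intro x hx
  have hxl : x ∈ u ++ (a + k) :: v := by
    simp only [mem_append, mem_cons] at hx ⊢
    tauto
  have := mem_range'_1.mp (hl.mem_iff.mp hxl)
  have : x ≠ a + k := fun h => hk (h ▸ hx)
  omega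

lemma perm_range'_of_pred_mem {a : ℕ} {u : List ℕ} (hu : u.Nodup) (hlo : ∀ x ∈ u, a < x)
    (hpred : ∀ x, a < x → x + 1 ∈ u → x ∈ u) : u ~ range' (a + 1) u.length := by
  have hdown : ∀ d x, a < x → x + d ∈ u → x ∈ u := by
    intro d
    induction d with
    | zero => exact fun x _ hx => hx
    | succ d ih =>
      exact fun x hax hx => hpred x hax (ih (x + 1) (by omega) (by rwa [add_right_comm]))
  refine (hu.subperm fun x hx => mem_range'_1.mpr ⟨hlo x hx, ?_⟩).perm_of_length_le (by simp)
  have hle : (range' (a + 1) (x - a)).length ≤ u.length :=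
    (Nodup.subperm nodup_range' fun y hy => by
      have := mem_range'_1.mp hy
      exact hdown (x - y) y (by omega) (by rwa [show y + (x - y) = x by omega])).length_le
  rw [length_range'] at hle
  have := hlo x hx
  omega

lemma perm_range'_of_append_cons {a k : ℕ} {u v : List ℕ}
    (hl : u ++ (a + k) :: v ~ range' (a + 1) k) (hu : u ~ range' (a + 1) u.length) :
    v ~ range' (a + u.length + 1) v.length := by
  have hk : k = u.length + v.length + 1 := by
    have := hl.length_eq
    simp only [length_append, length_cons, length_range'] at this
    omega
  rw [hk, show a + (u.length + v.length + 1) = a + u.length + v.length + 1 by omega] at hl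
  have := hl.trans ((range'_perm_append_cons a _ _).trans (hu.symm.append_right _))
  rw [perm_append_left_iff] at this
  exact this.cons_inv

open Relation

/-- Toggles among the values `a + 1, …, a + k`; unlike `ToggleStep n`, they commute with
appending words on other values. -/
def ToggleStepIn (a k : ℕ) (x y : List ℕ) : Prop :=
  ∃ i, a + 1 ≤ i ∧ i + 1 ≤ a + k ∧ y = toggle i x

lemma ToggleStepIn.mono {a k a' k' : ℕ} (ha : a' ≤ a) (hk : a + k ≤ a' + k') :
    ToggleStepIn a k ≤ ToggleStepIn a' k' := fun _ _ ⟨i, hi, hik, hy⟩ =>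
  ⟨i, by omega, by omega, hy⟩

lemma ToggleStepIn.perm {a k : ℕ} {x y : List ℕ} (h : ToggleStepIn a k x y)
    (hx : x ~ range' (a + 1) k) : y ~ range' (a + 1) k := by
  obtain ⟨i, hi, hik, rfl⟩ := h
  unfold toggle
  split_ifs
  · exact swapEntries_perm_range' hx hi hik
  · exact hx

lemma Relation.ReflTransGen.perm_range' {a k : ℕ} {x y : List ℕ}
    (h : ReflTransGen (ToggleStepIn a k) x y) (hx : x ~ range' (a + 1) k) :
    y ~ range' (a + 1) k := by
  induction h with
  | refl => exact hx
  | tail _ hstep ih => exact hstep.perm ih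

lemma Relation.ReflTransGen.toggleStepIn_append_left {a k : ℕ} {u u' v : List ℕ}
    (h : ReflTransGen (ToggleStepIn a k) u u') (hu : u ~ range' (a + 1) k) (huv : u.Disjoint v) :
    ReflTransGen (ToggleStepIn a k) (u ++ v) (u' ++ v) := by
  induction h with
  | refl => rfl
  | @tail y _ hy hstep ih =>
    have hy := hy.perm_range' hu
    obtain ⟨i, hi, hik, rfl⟩ := hstep
    have hdisj := (hy.trans hu.symm).disjoint_left.mpr huv
    exact ih.tail ⟨i, hi, hik, (toggle_append_left hdisj (mem_of_perm_range' hy hi (by omega))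
      (mem_of_perm_range' hy (by omega) (by omega))).symm⟩

lemma Relation.ReflTransGen.toggleStepIn_append_right {a k : ℕ} {u v v' : List ℕ}
    (h : ReflTransGen (ToggleStepIn a k) v v') (hv : v ~ range' (a + 1) k) (huv : u.Disjoint v) :
    ReflTransGen (ToggleStepIn a k) (u ++ v) (u ++ v') := by
  induction h with
  | refl => rfl
  | @tail y _ hy hstep ih =>
    have hy := hy.perm_range' hv
    obtain ⟨i, hi, hik, rfl⟩ := hstep
    have hdisj := (hy.trans hv.symm).disjoint_right.mpr huv
    exact ih.tail ⟨i, hi, hik, (toggle_append_right hdisj (mem_of_perm_range' hy hi (by omega))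
      (mem_of_perm_range' hy (by omega) (by omega))).symm⟩

lemma sum_swapEntries_lt {i : ℕ} {u : List ℕ} (hi : i ∉ u) (hi1 : i + 1 ∈ u) :
    (swapEntries i u).sum < u.sum := by
  rw [swapEntries_eq_map]
  conv_rhs => rw [← map_id u]
  refine sum_lt_sum _ _ (fun x hx => ?_) ⟨i + 1, hi1, by simp⟩
  rw [Equiv.swap_apply_def]
  split_ifs <;> simp_all

/-- While some `j + 1` lies left of the maximum `a + k` and `j` right of it, the toggle `p j`
applies and lowers the sum of the left part; once there is no such `j`, the left part is an
initial segment of the values. -/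
lemma exists_reflTransGen_left_sorted {a k : ℕ} (u v : List ℕ)
    (hl : u ++ (a + k) :: v ~ range' (a + 1) k) :
    ∃ u' v', ReflTransGen (ToggleStepIn a k) (u ++ (a + k) :: v) (u' ++ (a + k) :: v') ∧
      u' ~ range' (a + 1) u.length ∧ shape u' = shape u ∧ shape v' = shape v := by
  induction hs : u.sum using Nat.strong_induction_on generalizing u v with
  | _ s ih =>
  have hnd := hl.nodup_iff.mpr nodup_range'
  have hmem : ∀ x, x ∈ u ++ (a + k) :: v ↔ a < x ∧ x ≤ a + k := fun x => by
    rw [hl.mem_iff, mem_range'_1]; omega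
  have hdisj := disjoint_of_nodup_append hnd
  have hku : a + k ∉ u := fun h => hdisj h mem_cons_self
  by_cases hex : ∃ j, j + 1 ∈ u ∧ j ∈ v
  · obtain ⟨j, hju, hjv⟩ := hex
    have hj := (hmem j).mp (by simp [hjv])
    have hj1 := (hmem (j + 1)).mp (by simp [hju])
    have hj1k : j + 1 ≠ a + k := fun h => hku (h ▸ hju)
    have hju' : j ∉ u := fun h => hdisj h (mem_cons_of_mem _ hjv)
    have hjv' : j + 1 ∉ v := fun h => hdisj hju (mem_cons_of_mem _ h)
    have happ : ToggleApplies j (u ++ (a + k) :: v) :=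
      toggleApplies_append_cons hju hju' hku (by omega)
    have hstep : ToggleStepIn a k (u ++ (a + k) :: v)
        (swapEntries j u ++ (a + k) :: swapEntries j v) := by
      refine ⟨j, by omega, by omega, ?_⟩
      rw [toggle, if_pos happ, swapEntries_append, swapEntries_cons,
        Equiv.swap_apply_of_ne_of_ne (by omega) (by omega)]
    obtain ⟨u', v', hreach, hu', hsu, hsv⟩ :=
      ih _ (hs ▸ sum_swapEntries_lt hju' hju) _ _ (hstep.perm hl) rfl
    refine ⟨u', v', .head hstep hreach, ?_, ?_, ?_⟩
    · rwa [swapEntries_eq_map, length_map] at hu'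
    · rw [hsu, shape_swapEntries_of_notMem (.inl hju')]
    · rw [hsv, shape_swapEntries_of_notMem (.inr hjv')]
  · refine ⟨u, v, .refl, perm_range'_of_pred_mem hnd.of_append_left
      (fun x hx => ((hmem x).mp (mem_append_left _ hx)).1) fun x hax hx1 => ?_, rfl, rfl⟩
    have hxk := (hmem (x + 1)).mp (mem_append_left _ hx1)
    have hx : x ∈ u ++ (a + k) :: v := (hmem x).mpr (by omega)
    simp only [mem_append, mem_cons] at hx
    rcases hx with hx | hx | hx
    exacts [hx, absurd hx (by omega), absurd ⟨x, hx1, hx⟩ hex]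

/-- Sort the entries left of the maximum `a + k` into an initial segment of the values, then
recurse on both sides. -/
theorem reflTransGen_canon {a k : ℕ} {l : List ℕ} (hl : l ~ range' (a + 1) k) :
    ReflTransGen (ToggleStepIn a k) l (canon a (shape l)) := by
  induction k using Nat.strong_induction_on generalizing a l with
  | _ k ih =>
  rcases Nat.eq_zero_or_pos k with rfl | hk0
  · rw [range'_zero, perm_nil] at hl
    rw [hl, shape_nil]
    rfl
  obtain ⟨u, v, rfl⟩ := append_of_mem (mem_of_perm_range' hl (x := a + k) (by omega) (by omega))
  obtain ⟨u', v', hsort, hu', hsu, hsv⟩ := exists_reflTransGen_left_sorted u v hl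
  have hlu : u'.length = u.length := by rw [← numNodes_shape, hsu, numNodes_shape]
  have hlv : v'.length = v.length := by rw [← numNodes_shape, hsv, numNodes_shape]
  have hk : k = u.length + v.length + 1 := by
    have := hl.length_eq
    simp only [length_append, length_cons, length_range'] at this
    omega
  rw [← hlu] at hu'
  have hl' := hsort.perm_range' hl
  have hv' := perm_range'_of_append_cons hl' hu'
  have hleft : ReflTransGen (ToggleStepIn a k) (u' ++ (a + k) :: v')
      (canon a (shape u') ++ (a + k) :: v') :=
    ReflTransGen.mono (ToggleStepIn.mono le_rfl (by omega)) _ _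
      ((ih _ (by omega) hu').toggleStepIn_append_left hu'
        (disjoint_of_nodup_append (hl'.nodup_iff.mpr nodup_range')))
  have hright : ReflTransGen (ToggleStepIn a k) ((canon a (shape u') ++ [a + k]) ++ v')
      ((canon a (shape u') ++ [a + k]) ++ canon (a + u'.length) (shape v')) := by
    have hnd := (hleft.perm_range' hl').nodup_iff.mpr nodup_range'
    rw [← singleton_append, ← append_assoc] at hnd
    exact ReflTransGen.mono (ToggleStepIn.mono (by omega) (by omega)) _ _
      ((ih _ (by omega) hv').toggleStepIn_append_right hv' (disjoint_of_nodup_append hnd))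
  have hlt := lt_of_append_cons_perm_range' hl
  rw [canon_shape_append_cons a (fun x hx => hlt x (mem_append_left _ hx))
      fun x hx => (hlt x (mem_append_right _ hx)).le,
    show a + u.length + v.length + 1 = a + k by omega, ← hsu, ← hsv, ← hlu]
  simp only [append_assoc, singleton_append] at hright
  exact hsort.trans (hleft.trans hright)

lemma ToggleStepIn.toggleStep {n : ℕ} {x y : List ℕ} (h : ToggleStepIn 0 n x y) :
    ToggleStep n x y := by
  obtain ⟨i, hi, hin, rfl⟩ := h
  exact ⟨i, by omega, by omega, rfl⟩

lemma orbitRel_canon_shape {n : ℕ} {l : List ℕ} (hl : IsPermList n l) :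
    OrbitRel n l (canon 0 (shape l)) :=
  EqvGen.reflTransGen_le_eqvGen (r := ToggleStep n) _ _
    (ReflTransGen.mono (fun _ _ h => h.toggleStep) _ _ (reflTransGen_canon (a := 0) hl))

noncomputable def orbitEquivBinaryTree (n : ℕ) :
    Quotient (orbitSetoid n) ≃ {t : BinaryTree Unit // t.numNodes = n} where
  toFun := Quotient.lift
    (fun x => ⟨shape x.1, (numNodes_shape _).trans (by simpa using x.2.length_eq)⟩)
    fun x _ h => Subtype.ext (OrbitRel.shape_eq h x.2)
  invFun t := ⟦⟨canon 0 t.1, by have := canon_perm 0 t.1; rwa [t.2] at this⟩⟧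
  left_inv := by
    rintro ⟨x⟩
    exact Quotient.sound (Relation.EqvGen.symm _ _ (orbitRel_canon_shape x.2))
  right_inv t := Subtype.ext (shape_canon 0 t.1)

/-- The number of orbits of the polyurethane group `𝒫ₙ` acting on `Sₙ` is the `n`-th
Catalan number. -/
theorem card_orbits_eq_catalan (n : ℕ) :
    Nat.card (Quotient (orbitSetoid n)) = catalan n := by
  rw [Nat.card_congr (orbitEquivBinaryTree n), ← BinaryTree.treesOfNumNodesEq_card_eq_catalan,
    ← Nat.card_eq_finsetCard]
  simp_rw [BinaryTree.mem_treesOfNumNodesEq]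
end

section
/- If two permutations π, π' ∈ S_n have the same skeleton, then |s⁻¹(π)| = |s⁻¹(π')|; equivalently, the fertility statistic fer(π) = |s⁻¹(π)| is a skeletal statistic. -/
lemma max_getD_mem (l : List ℕ) (h : l ≠ []) : l.max?.getD 0 ∈ l := by
  rcases hm : l.max? with _ | m'
  · exact absurd (List.max?_eq_none_iff.mp hm) h
  · simpa using List.max?_mem hm

lemma length_takeWhile_lt (p : ℕ → Bool) (l : List ℕ) (x : ℕ) (hx : x ∈ l) (hpx : p x = false) :
    (l.takeWhile p).length < l.length := by
  rcases Nat.lt_or_ge (l.takeWhile p).length l.length with h | h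
  · exact h
  · have := List.takeWhile_eq_self_iff.mp ((List.takeWhile_sublist p).eq_of_length_le h) x hx
    rw [hpx] at this; exact absurd this (by simp)

lemma length_dropWhile_tail_lt (p : ℕ → Bool) (l : List ℕ) (h : l ≠ []) :
    ((l.dropWhile p).tail).length < l.length := by
  have h1 : (l.dropWhile p).length ≤ l.length := (List.dropWhile_sublist _).length_le
  have h2 : ((l.dropWhile p).tail).length ≤ (l.dropWhile p).length - 1 := by
    simp [List.length_tail]
  have : 0 < l.length := List.length_pos_iff.mpr h
  omega

/-- West's stack-sorting map `s`: `s([]) = []` and `s(LmR) = s(L) s(R) m`,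
where `m` is the largest entry. -/
def stackSort : List ℕ → List ℕ
  | [] => []
  | a :: rest =>
    stackSort ((a :: rest).takeWhile (· ≠ (a :: rest).max?.getD 0)) ++
      stackSort (((a :: rest).dropWhile (· ≠ (a :: rest).max?.getD 0)).tail) ++
      [(a :: rest).max?.getD 0]
termination_by l => l.length
decreasing_by
  · exact length_takeWhile_lt _ _ _ (max_getD_mem (a :: rest) (by simp)) (by simp)
  · exact length_dropWhile_tail_lt _ _ (by simp)

/-- The inverse of the permutation `l` of `{1, …, n}`, as a word: its `k`-th entry is the
position (1-indexed) of the entry `k` in `l`. -/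
def invw (l : List ℕ) : List ℕ := (List.range' 1 l.length).map fun k => l.idxOf k + 1

/-- The composition `l · m` of permutations written as words: `(l · m) j = l (m j)`. -/
def compw (l m : List ℕ) : List ℕ := m.map fun k => l.getD (k - 1) 0

/-- The group element `π⁻¹ · s(π)`, which encodes the skeleton of `π`: two permutations of
`{1, …, n}` have the same skeleton if and only if their `skel`s coincide. -/
def skel (l : List ℕ) : List ℕ := compw (invw l) (stackSort l)

open List

/-!
Let `f` send the `k`-th entry of `π` to the `k`-th entry of `π'`. Equal skeletons say precisely
that `s(π') = f(s(π))`, i.e. that `f` commutes with `s` at `π`.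

In a word without repeated entries, an entry `m` exceeds every entry of a factor `v m` iff `s`
outputs all of `v` before `m`. Hence, if `f` commutes with `s` at `π`, then `f` respects every
comparison between such a "right maximum" `m` of `π` and the entries of `v`. These are the only
comparisons that `s` makes when sorting a preimage `σ` of `π`: each recursive step splits a
factor `L M R` of `σ` at its maximum `M`, and `s` outputs `L` and `R` right before `M`. So `f`
commutes with `s` at `σ`, and `σ ↦ f(σ)` is a bijection from `s⁻¹(π)` onto `s⁻¹(π')`.
-/

theorem stackSort_append_cons {L R : List ℕ} {M : ℕ} (hL : ∀ x ∈ L, x < M)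
    (hR : ∀ x ∈ R, x ≤ M) : stackSort (L ++ M :: R) = stackSort L ++ stackSort R ++ [M] := by
  have hmax : (L ++ M :: R).max? = some M := by
    refine List.max?_eq_some_iff.2 ⟨by simp, fun x hx => ?_⟩
    rcases List.mem_append.1 hx with hx | hx
    · exact (hL x hx).le
    · rcases List.mem_cons.1 hx with rfl | hx
      exacts [le_rfl, hR x hx]
  have hne : ∀ x ∈ L, decide (x ≠ M) = true := fun x hx => by simpa using (hL x hx).ne
  obtain ⟨a, rest, h⟩ := List.exists_cons_of_ne_nil (by simp : L ++ M :: R ≠ [])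
  rw [h, stackSort, ← h, hmax, Option.getD_some, List.takeWhile_append_of_pos hne,
    List.dropWhile_append_of_pos hne]
  simp

theorem exists_eq_append_cons_max {l : List ℕ} (hl : l ≠ []) :
    ∃ L M R, l = L ++ M :: R ∧ (∀ x ∈ L, x < M) ∧ ∀ x ∈ R, x ≤ M := by
  obtain ⟨M, hM⟩ := Option.ne_none_iff_exists'.1 (mt List.max?_eq_none_iff.1 hl)
  obtain ⟨hMl, hle⟩ := List.max?_eq_some_iff.1 hM
  obtain ⟨L, R, hML, rfl, -⟩ := List.exists_erase_eq hMl
  refine ⟨L, M, R, rfl, fun x hx => (hle x (by simp [hx])).lt_of_ne ?_,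
    fun x hx => hle x (by simp [hx])⟩
  rintro rfl
  exact hML hx

theorem max_split_induction {motive : List ℕ → Prop} (nil : motive [])
    (split : ∀ L M R, (∀ x ∈ L, x < M) → (∀ x ∈ R, x ≤ M) → motive L → motive R →
      motive (L ++ M :: R))
    (l : List ℕ) : motive l := by
  induction h : l.length using Nat.strong_induction_on generalizing l with
  | _ n ih =>
    rcases eq_or_ne l [] with rfl | hl
    · exact nil
    obtain ⟨L, M, R, rfl, hL, hR⟩ := exists_eq_append_cons_max hl
    simp only [List.length_append, List.length_cons] at h
    exact split L M R hL hR (ih _ (by omega) L rfl) (ih _ (by omega) R rfl)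

theorem stackSort_perm (l : List ℕ) : (stackSort l).Perm l := by
  induction l using max_split_induction with
  | nil => simp [stackSort]
  | split L M R hL hR ihL ihR =>
    rw [stackSort_append_cons hL hR]
    refine ((ihL.append ihR).append_right [M]).trans ?_
    simpa using (List.perm_append_singleton M R).append_left L

theorem List.IsInfix.infix_or_infix_or_mem_of_append_cons {α : Type*} {w L R : List α} {M : α}
    (h : w <:+: L ++ M :: R) : w <:+: L ∨ w <:+: R ∨ M ∈ w := by
  rcases List.infix_append_iff.1 h with h | h | ⟨l₁, l₂, rfl, h₁, h₂⟩
  · exact .inl h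
  · rcases List.infix_cons_iff.1 h with h | h
    · rcases List.prefix_cons_iff.1 h with rfl | ⟨t, rfl, -⟩
      · exact .inl List.nil_infix
      · simp
    · exact .inr (.inl h)
  · rcases List.prefix_cons_iff.1 h₂ with rfl | ⟨t, rfl, -⟩
    · exact .inl (by simpa using h₁.isInfix)
    · simp

theorem List.pair_sublist_append_iff_of_notMem_right {α : Type*} {y m : α} {A X : List α}
    (hm : m ∉ X) : [y, m] <+ A ++ X ↔ [y, m] <+ A := by
  refine ⟨fun h => ?_, fun h => h.trans (List.sublist_append_left A X)⟩
  obtain ⟨l₁, l₂, he, h₁, h₂⟩ := List.sublist_append_iff.1 h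
  rcases l₂.eq_nil_or_concat with rfl | ⟨l, z, rfl⟩
  · simpa [he] using h₁
  · rw [List.concat_eq_append, ← List.append_assoc] at he
    obtain ⟨-, hz⟩ := List.append_inj' (he.symm.trans (by rfl : [y, m] = [y] ++ [m])) rfl
    exact absurd (h₂.subset (by simp_all)) hm

theorem List.pair_sublist_append_iff_of_notMem_left {α : Type*} {y m : α} {A X : List α}
    (hy : y ∉ A) : [y, m] <+ A ++ X ↔ [y, m] <+ X := by
  refine ⟨fun h => ?_, fun h => h.trans (List.sublist_append_right A X)⟩
  obtain ⟨l₁, l₂, he, h₁, h₂⟩ := List.sublist_append_iff.1 h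
  rcases l₁ with _ | ⟨z, l⟩
  · simpa [he] using h₂
  · obtain ⟨rfl, -⟩ := List.cons_eq_cons.1 he
    exact absurd (h₁.subset (by simp)) hy

theorem mem_stackSort {l : List ℕ} {x : ℕ} : x ∈ stackSort l ↔ x ∈ l :=
  (stackSort_perm l).mem_iff

theorem forall_lt_iff_forall_pair_sublist_stackSort {l v : List ℕ} {m : ℕ} (hl : l.Nodup)
    (hv : v ++ [m] <:+: l) : (∀ y ∈ v, y < m) ↔ ∀ y ∈ v, [y, m] <+ stackSort l := by
  induction l using max_split_induction generalizing v m with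
  | nil => simp_all
  | split L M R hL hR ihL ihR =>
    obtain ⟨hLnd, hMRnd, hLR⟩ := List.nodup_append.1 hl
    obtain ⟨hMR, hRnd⟩ := List.nodup_cons.1 hMRnd
    have hML : M ∉ L := fun h => (hL M h).false
    have hlt : ∀ x ∈ L ++ M :: R, x ≠ M → x < M := by
      intro x hx hxM
      rcases List.mem_append.1 hx with hx | hx
      · exact hL x hx
      · exact (hR x ((List.mem_cons.1 hx).resolve_left hxM)).lt_of_ne hxM
    rw [stackSort_append_cons hL hR]
    rcases hv.infix_or_infix_or_mem_of_append_cons with hv | hv | hMv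
    · have hmL : m ∈ L := hv.subset (by simp)
      have hmR : m ∉ stackSort R ++ [M] := by
        simp only [List.mem_append, mem_stackSort, List.mem_singleton, not_or]
        exact ⟨fun h => hLR m hmL m (by simp [h]) rfl, fun h => hML (h ▸ hmL)⟩
      simp only [List.append_assoc, List.pair_sublist_append_iff_of_notMem_right hmR]
      exact ihL hLnd hv
    · have hmM : m ∉ [M] := by
        simpa using fun h : m = M => hMR (h ▸ hv.subset (by simp))
      refine (ihR hRnd hv).trans (forall₂_congr fun y hy => ?_)
      have hyL : y ∉ stackSort L := fun h =>
        hLR y (mem_stackSort.1 h) y (List.mem_cons_of_mem M (hv.subset (by simp [hy]))) rfl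
      rw [List.pair_sublist_append_iff_of_notMem_right hmM,
        List.pair_sublist_append_iff_of_notMem_left hyL]
    -- a factor through the maximum `M` satisfies both sides iff it ends at `M`
    · have hvm := List.nodup_append.1 (hl.sublist hv.sublist)
      rcases List.mem_append.1 hMv with hMv | hMm
      · have hmM : m ≠ M := fun h => hvm.2.2 M hMv m (by simp) h.symm
        refine iff_of_false (fun h => (h M hMv).not_gt (hlt m (hv.subset (by simp)) hmM))
          fun h => ?_
        have := (List.pair_sublist_append_iff_of_notMem_right (by simpa using hmM)).1 (h M hMv)
        simpa [mem_stackSort, hML, hMR] using this.subset (List.mem_cons_self ..)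
      · obtain rfl : M = m := by simpa using hMm
        refine iff_of_true (fun y hy => hlt y (hv.subset (by simp [hy]))
          fun h => hvm.2.2 y hy M (by simp) h) fun y hy => ?_
        have hyM : y ≠ M := fun h => hvm.2.2 y hy M (by simp) h
        have hy' : y ∈ L ++ M :: R := hv.subset (by simp [hy])
        refine List.Sublist.append (List.singleton_sublist.2 ?_) (List.Sublist.refl [M])
        simpa [mem_stackSort, hyM] using hy'

def PreservesRightMaxima (f : ℕ → ℕ) (π : List ℕ) : Prop :=
  ∀ v m, v ++ [m] <:+: π → (∀ y ∈ v, y < m) → ∀ y ∈ v, f y < f m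

theorem PreservesRightMaxima.mono {f : ℕ → ℕ} {π ρ : List ℕ} (h : PreservesRightMaxima f π)
    (hρ : ρ <:+: π) : PreservesRightMaxima f ρ :=
  fun v m hv => h v m (hv.trans hρ)

theorem stackSort_map_of_preservesRightMaxima {f : ℕ → ℕ} {l : List ℕ} (hl : l.Nodup)
    (hf : PreservesRightMaxima f (stackSort l)) : stackSort (l.map f) = (stackSort l).map f := by
  induction l using max_split_induction with
  | nil => simp [stackSort]
  | split L M R hL hR ihL ihR =>
    obtain ⟨hLnd, hMRnd, -⟩ := List.nodup_append.1 hl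
    obtain ⟨hMR, hRnd⟩ := List.nodup_cons.1 hMRnd
    rw [stackSort_append_cons hL hR] at hf ⊢
    have hfM : ∀ y ∈ stackSort L ++ stackSort R, f y < f M := by
      refine hf _ M List.infix_rfl fun y hy => ?_
      rcases List.mem_append.1 hy with hy | hy
      · exact hL y (mem_stackSort.1 hy)
      · exact (hR y (mem_stackSort.1 hy)).lt_of_ne fun h => hMR (h ▸ mem_stackSort.1 hy)
    have hfL : ∀ y ∈ L.map f, y < f M := by
      simpa [mem_stackSort] using fun y hy => hfM y (by simp [mem_stackSort, hy])
    have hfR : ∀ y ∈ R.map f, y ≤ f M := by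
      simpa [mem_stackSort] using fun y hy => (hfM y (by simp [mem_stackSort, hy])).le
    rw [List.map_append, List.map_cons, stackSort_append_cons hfL hfR,
      ihL hLnd (hf.mono (List.infix_append_left.trans List.infix_append_left)),
      ihR hRnd (hf.mono (List.infix_append _ _ _))]
    simp

theorem preservesRightMaxima_of_stackSort_map {f : ℕ → ℕ} {l : List ℕ} (hl : l.Nodup)
    (hf : Set.InjOn f {x | x ∈ l}) (h : stackSort (l.map f) = (stackSort l).map f) :
    PreservesRightMaxima f l := by
  intro v m hv hlt
  have hfv : (v.map f) ++ [f m] <:+: l.map f := by simpa using hv.map f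
  have hbefore := (forall_lt_iff_forall_pair_sublist_stackSort hl hv).1 hlt
  simpa using (forall_lt_iff_forall_pair_sublist_stackSort
    (hl.map_on fun x hx y hy => @hf x hx y hy) hfv).2
    (by simpa [h] using fun y hy => (hbefore y hy).map f)

theorem stackSort_map_of_stackSort_map_stackSort {f : ℕ → ℕ} {σ : List ℕ} (hσ : σ.Nodup)
    (hf : Set.InjOn f {x | x ∈ σ})
    (h : stackSort ((stackSort σ).map f) = (stackSort (stackSort σ)).map f) :
    stackSort (σ.map f) = (stackSort σ).map f :=
  stackSort_map_of_preservesRightMaxima hσ <|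
    preservesRightMaxima_of_stackSort_map ((stackSort_perm σ).nodup_iff.2 hσ)
      (hf.mono fun _ hx => mem_stackSort.1 hx) h

theorem IsPermList.nodup {n : ℕ} {l : List ℕ} (h : IsPermList n l) : l.Nodup :=
  List.Perm.nodup_iff h |>.2 List.nodup_range'

theorem IsPermList.length_eq {n : ℕ} {l : List ℕ} (h : IsPermList n l) : l.length = n := by
  simpa using List.Perm.length_eq h

theorem IsPermList.mem_iff {n : ℕ} {l : List ℕ} (h : IsPermList n l) {x : ℕ} :
    x ∈ l ↔ 1 ≤ x ∧ x ≤ n := by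
  rw [List.Perm.mem_iff h, List.mem_range'_1]
  omega

def relabel (π π' : List ℕ) (v : ℕ) : ℕ := π'.getD (π.idxOf v) 0

theorem relabel_self {π : List ℕ} {v : ℕ} (hv : v ∈ π) : relabel π π v = v := by
  rw [relabel, List.getD_eq_getElem _ _ (List.idxOf_lt_length_iff.2 hv), List.getElem_idxOf]

theorem map_relabel_self {π π' : List ℕ} (hπ : π.Nodup) (hlen : π.length = π'.length) :
    π.map (relabel π π') = π' := by
  refine List.ext_getElem (by simp [hlen]) fun i h₁ h₂ => ?_
  rw [List.getElem_map, relabel, hπ.idxOf_getElem, List.getD_eq_getElem _ _ h₂]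

theorem relabel_relabel {π π' : List ℕ} (hπ' : π'.Nodup) (hlen : π.length = π'.length)
    {v : ℕ} (hv : v ∈ π) : relabel π' π (relabel π π' v) = v := by
  have hi := List.idxOf_lt_length_iff.2 hv
  rw [relabel, relabel, List.getD_eq_getElem π' 0 (hlen ▸ hi), hπ'.idxOf_getElem,
    List.getD_eq_getElem _ _ hi, List.getElem_idxOf]

theorem invw_getD {π : List ℕ} {k : ℕ} (hk : 1 ≤ k) (hkπ : k ≤ π.length) :
    (invw π).getD (k - 1) 0 = π.idxOf k + 1 := by
  rw [invw, List.getD_eq_getElem _ _ (by simp; omega), List.getElem_map, List.getElem_range']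
  congr 2
  omega

theorem map_getD_skel {n : ℕ} {π : List ℕ} (hπ : IsPermList n π) (π' : List ℕ) :
    (skel π).map (fun k => π'.getD (k - 1) 0) = (stackSort π).map (relabel π π') := by
  rw [skel, compw, List.map_map]
  refine List.map_congr_left fun k hk => ?_
  obtain ⟨hk1, hkn⟩ := hπ.mem_iff.1 (mem_stackSort.1 hk)
  simp only [Function.comp_apply, invw_getD hk1 (hπ.length_eq ▸ hkn), Nat.add_sub_cancel,
    relabel]

theorem stackSort_eq_map_relabel_of_skel_eq {n : ℕ} {π π' : List ℕ} (hπ : IsPermList n π)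
    (hπ' : IsPermList n π') (hsk : skel π = skel π') :
    stackSort π' = (stackSort π).map (relabel π π') := by
  rw [← map_getD_skel hπ, hsk, map_getD_skel hπ']
  exact (List.map_congr_left fun x hx => relabel_self (mem_stackSort.1 hx)).trans
    (List.map_id _) |>.symm

theorem IsPermList.map_relabel {n : ℕ} {σ π π' : List ℕ} (hσ : IsPermList n σ)
    (hπ : IsPermList n π) (hπ' : IsPermList n π') : IsPermList n (σ.map (relabel π π')) := by
  have h := (List.Perm.trans hσ (List.Perm.symm hπ)).map (relabel π π')
  rw [map_relabel_self hπ.nodup (by rw [hπ.length_eq, hπ'.length_eq])] at h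
  exact h.trans hπ'

theorem map_relabel_relabel {n : ℕ} {π π' σ : List ℕ} (hπ : IsPermList n π)
    (hπ' : IsPermList n π') (hσ : IsPermList n σ) :
    (σ.map (relabel π π')).map (relabel π' π) = σ := by
  rw [List.map_map]
  refine (List.map_congr_left fun v hv => ?_).trans (List.map_id σ)
  exact relabel_relabel hπ'.nodup (by rw [hπ.length_eq, hπ'.length_eq])
    (hπ.mem_iff.2 (hσ.mem_iff.1 hv))

theorem stackSort_map_relabel {n : ℕ} {π π' σ : List ℕ} (hπ : IsPermList n π)
    (hπ' : IsPermList n π') (hsk : skel π = skel π') (hσ : σ.Nodup) (hs : stackSort σ = π) :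
    stackSort (σ.map (relabel π π')) = π' := by
  have hlen : π.length = π'.length := by rw [hπ.length_eq, hπ'.length_eq]
  have hinj : Set.InjOn (relabel π π') {x | x ∈ π} :=
    Set.LeftInvOn.injOn fun _ hv => relabel_relabel hπ'.nodup hlen hv
  have hcomm : stackSort (π.map (relabel π π')) = (stackSort π).map (relabel π π') := by
    rw [map_relabel_self hπ.nodup hlen, stackSort_eq_map_relabel_of_skel_eq hπ hπ' hsk]
  subst hs
  rw [stackSort_map_of_stackSort_map_stackSort hσ (hinj.mono fun _ hx => mem_stackSort.2 hx)
    hcomm, map_relabel_self hπ.nodup hlen]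

/-- The fertility `|s⁻¹(π)|` is a skeletal statistic: permutations with the same skeleton
have the same fertility. -/
theorem fertility_skeletal (n : ℕ) (π π' : List ℕ) (hπ : IsPermList n π)
    (hπ' : IsPermList n π') (hsk : skel π = skel π') :
    Nat.card {σ : List ℕ // IsPermList n σ ∧ stackSort σ = π} =
      Nat.card {σ : List ℕ // IsPermList n σ ∧ stackSort σ = π'} :=
  Nat.card_congr
    { toFun := fun σ => ⟨σ.1.map (relabel π π'), σ.2.1.map_relabel hπ hπ',
        stackSort_map_relabel hπ hπ' hsk σ.2.1.nodup σ.2.2⟩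
      invFun := fun σ => ⟨σ.1.map (relabel π' π), σ.2.1.map_relabel hπ' hπ,
        stackSort_map_relabel hπ' hπ hsk.symm σ.2.1.nodup σ.2.2⟩
      left_inv := fun σ => Subtype.ext (map_relabel_relabel hπ hπ' σ.2.1)
      right_inv := fun σ => Subtype.ext (map_relabel_relabel hπ' hπ σ.2.1) }
end
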